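/- arXiv:2507.21031 — 2 statements merged into one kernel-verified Lean document; each statement's English description precedes it below -/
import Mathlib

section
/- Let n, m ≥ 1, set N = 2n+2m and γ = γ_{2n,2m}. Let π ∈ S_NC(2n,2m) be such that the subgroup generated by π and the interval involution I_N acts transitively on {1,…,N}. Then there are no two distinct even numbers r, s lying in the same cycle of γ (i.e., with r, s both in {1,…,2n} or both in {2n+1,…,N}) that lie in the same cycle of π⁻¹γ. -/
noncomputable def cycleCount {N : ℕ} (π : Equiv.Perm (Fin N)) : ℕ :=
  Set.ncard {O : Set (Fin N) | ∃ x, O = {y | π.SameCycle x y}}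

noncomputable def cyclesIn {N : ℕ} (π : Equiv.Perm (Fin N)) (C : Set (Fin N)) : ℕ :=
  Set.ncard {O : Set (Fin N) | (∃ x, O = {y | π.SameCycle x y}) ∧ O ⊆ C}

/-- The annular permutation `γ_{p,q}` of `{1,…,p+q}` (0-indexed as `Fin (p+q)`),
with the two cycles `(1,…,p)` and `(p+1,…,p+q)`. -/
def annularGamma (p q : ℕ) : Equiv.Perm (Fin (p + q)) :=
  finSumFinEquiv.permCongr ((finRotate p).sumCongr (finRotate q))

/-- The interval involution `I_N = (1 2)(3 4)⋯(N-1 N)` of `{1,…,N}`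
(0-indexed: swaps `2i ↔ 2i+1`), for `N` even. -/
def intervalInvolution (N : ℕ) : Equiv.Perm (Fin N) :=
  Function.Involutive.toPerm
    (fun x => ⟨if x.val % 2 = 0 then min (x.val + 1) (N - 1) else x.val - 1, by
      rcases x with ⟨v, hv⟩
      dsimp only
      split <;> omega⟩)
    (by
      intro x
      rcases x with ⟨v, hv⟩
      apply Fin.ext
      dsimp only
      split_ifs <;> omega)

/-- The subgroup generated by `π` and `ρ` acts transitively on `Fin N`. -/
def JointTrans {N : ℕ} (π ρ : Equiv.Perm (Fin N)) : Prop :=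
  ∀ x y : Fin N, ∃ g ∈ Subgroup.closure ({π, ρ} : Set (Equiv.Perm (Fin N))), g x = y

/-- `α` separates even numbers: no cycle of `α` contains two distinct even numbers
(an element `x : Fin N` represents the number `x.val + 1`). -/
def SeparatesEven {N : ℕ} (α : Equiv.Perm (Fin N)) : Prop :=
  ∀ x y : Fin N, α.SameCycle x y → (x.val + 1) % 2 = 0 → (y.val + 1) % 2 = 0 → x = y

/-- `π ∈ S_NC(p,q)`: annular non-crossing permutations. -/
def AnnularNC (p q : ℕ) (π : Equiv.Perm (Fin (p + q))) : Prop :=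
  JointTrans π (annularGamma p q) ∧
    cycleCount π + cycleCount (π⁻¹ * annularGamma p q) = p + q

/-- `A` witnesses bipartiteness of the graph `G_π`: `π(A) = A` and for each `i`,
exactly one of the (1-indexed) numbers `2i-1`, `2i` belongs to `A`. -/
def BipartSet {N : ℕ} (π : Equiv.Perm (Fin N)) (A : Set (Fin N)) : Prop :=
  (⇑π) '' A = A ∧ ∀ i : ℕ, ∀ h : 2 * i + 1 < N,
    Xor' ((⟨2 * i, Nat.lt_of_succ_lt h⟩ : Fin N) ∈ A) ((⟨2 * i + 1, h⟩ : Fin N) ∈ A)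

/-- The graph `G_π` is bipartite. -/
def GraphBipartite {N : ℕ} (π : Equiv.Perm (Fin N)) : Prop :=
  ∃ A : Set (Fin N), BipartSet π A

/-- `π ∈ J_{2n,2m}`: annular non-crossing, bipartite graph, and `π⁻¹γ` separates even. -/
def memJ (n m : ℕ) (π : Equiv.Perm (Fin (2 * n + 2 * m))) : Prop :=
  AnnularNC (2 * n) (2 * m) π ∧ GraphBipartite π ∧
    SeparatesEven (π⁻¹ * annularGamma (2 * n) (2 * m))

/-!
Write `#ρ` for the number of cycles of a permutation `ρ` of an `N`-element set and `κ(σ, φ)`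
for the number of orbits of `⟨σ, φ⟩`. Multiplying `ρ` by a transposition `(a b)` splits the
cycle through `a` and `b` if they share one and merges their cycles otherwise; induction on
`N - #φ`, peeling off transpositions `(a φ(a))`, then gives the genus inequality
`#σ + #φ + #(σφ) ≤ N + 2 κ(σ, φ)`.

If two distinct even numbers `r, s` lay in one cycle of `γ` and one cycle of `π⁻¹γ`, then with
`τ = (r s)` we would have `#(γτ) = #γ + 1 = 3` and `#(π⁻¹γτ) = #(π⁻¹γ) + 1`, so the genus
inequality for `(π, π⁻¹γτ)` and `#π + #(π⁻¹γ) = N` force `⟨π, γτ⟩` to have at least two orbits.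
But `τ` fixes the odd numbers and `γ(2i - 1) = 2i = I_N(2i - 1)`, so every orbit of `⟨π, γτ⟩` is
`I_N`-invariant, contradicting the transitivity of `⟨π, I_N⟩`.
-/

open Equiv Equiv.Perm MulAction Subgroup

namespace Setoid

variable {α : Type*}

def mergeClasses (s : Setoid α) (a b : α) : Setoid α where
  r x y := s x y ∨ ((s x a ∨ s x b) ∧ (s y a ∨ s y b))
  iseqv := by
    refine ⟨fun x => Or.inl (s.refl' x), ?_, ?_⟩
    · rintro x y (h | ⟨hx, hy⟩)
      · exact Or.inl (s.symm' h)
      · exact Or.inr ⟨hy, hx⟩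
    · rintro x y z (h | ⟨hx, hy⟩) (g | ⟨gy, gz⟩)
      · exact Or.inl (s.trans' h g)
      · exact Or.inr ⟨gy.imp (s.trans' h) (s.trans' h), gz⟩
      · exact Or.inr ⟨hx, hy.imp (s.trans' (s.symm' g)) (s.trans' (s.symm' g))⟩
      · exact Or.inr ⟨hx, gz⟩

variable {s t : Setoid α} {a b : α}

theorem le_mergeClasses : s ≤ s.mergeClasses a b := fun _ _ => Or.inl

theorem mergeClasses_rel : s.mergeClasses a b a b :=
  Or.inr ⟨Or.inl (s.refl' a), Or.inr (s.refl' b)⟩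

theorem mergeClasses_le (h : s ≤ t) (hab : t a b) : s.mergeClasses a b ≤ t := by
  have toA : ∀ {x}, s x a ∨ s x b → t x a :=
    fun hx => hx.elim (fun h' => h h') (fun h' => t.trans' (h h') (t.symm' hab))
  rintro x y (hxy | ⟨hx, hy⟩)
  · exact h hxy
  · exact t.trans' (toA hx) (t.symm' (toA hy))

theorem mergeClasses_eq_self (h : s a b) : s.mergeClasses a b = s :=
  le_antisymm (mergeClasses_le le_rfl h) le_mergeClasses

variable [Finite α]

theorem card_quotient_le_of_le (h : s ≤ t) : Nat.card (Quotient t) ≤ Nat.card (Quotient s) :=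
  Nat.card_le_card_of_surjective (Quotient.map' id h) (Quotient.ind fun x => ⟨⟦x⟧, rfl⟩)

theorem card_quotient_mergeClasses_add_one (h : ¬ s a b) :
    Nat.card (Quotient (s.mergeClasses a b)) + 1 = Nat.card (Quotient s) := by
  classical
  let f : Quotient s → Quotient (s.mergeClasses a b) := Quotient.map' id fun _ _ => Or.inl
  have hf : Function.Surjective f := Quotient.ind fun x => ⟨⟦x⟧, rfl⟩
  have lt : Nat.card (Quotient (s.mergeClasses a b)) < Nat.card (Quotient s) := by
    have : Fintype (Quotient s) := Fintype.ofFinite _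
    have : Fintype (Quotient (s.mergeClasses a b)) := Fintype.ofFinite _
    simp only [Nat.card_eq_fintype_card]
    refine Fintype.card_lt_of_surjective_not_injective f hf fun hinj => h ?_
    exact Quotient.exact (hinj (Quotient.sound mergeClasses_rel : f ⟦a⟧ = f ⟦b⟧))
  -- the classes of `s` other than that of `b` stay distinct after merging
  let j (q : Quotient s) : Option (Quotient (s.mergeClasses a b)) :=
    if q = ⟦b⟧ then none else some (f q)
  have hj : Function.Injective j := by
    refine Quotient.ind fun x => Quotient.ind fun y hxy => ?_
    by_cases hx : (⟦x⟧ : Quotient s) = ⟦b⟧ <;> by_cases hy : (⟦y⟧ : Quotient s) = ⟦b⟧ <;>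
      simp only [j, hx, hy, if_true, if_false, reduceCtorEq, Option.some_inj] at hxy ⊢
    have hx' : ¬ s x b := fun h' => hx (Quotient.sound h')
    have hy' : ¬ s y b := fun h' => hy (Quotient.sound h')
    rcases Quotient.exact hxy with hxy | ⟨hxa | hxb, hya | hyb⟩
    · exact Quotient.sound hxy
    · exact Quotient.sound (s.trans' hxa (s.symm' hya))
    all_goals contradiction
  have le := Nat.card_le_card_of_injective j hj
  rw [Finite.card_option] at le
  omega

theorem card_quotient_le_card_quotient_mergeClasses_add_one :
    Nat.card (Quotient s) ≤ Nat.card (Quotient (s.mergeClasses a b)) + 1 := by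
  by_cases h : s a b
  · rw [mergeClasses_eq_self h]
    omega
  · rw [← card_quotient_mergeClasses_add_one h]

end Setoid

theorem Subgroup.closure_pair_inv_mul {G : Type*} [Group G] (g h : G) :
    closure {g, g⁻¹ * h} = closure {g, h} := by
  have hg {k : G} : g ∈ closure {g, k} := subset_closure (Set.mem_insert _ _)
  have hk {k : G} : k ∈ closure {g, k} := subset_closure (Set.mem_insert_of_mem _ rfl)
  apply le_antisymm <;> rw [closure_le, Set.insert_subset_iff, Set.singleton_subset_iff]
  · exact ⟨hg, mul_mem (inv_mem hg) hk⟩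
  · exact ⟨hg, by simpa using mul_mem (hg (k := g⁻¹ * h)) hk⟩

namespace Equiv.Perm

variable {α : Type*}

section SameCycle

variable {ρ : Perm α} {a b x y : α}

theorem SameCycle.mem_of_mapsTo [Finite α] {s : Set α} (hs : Set.MapsTo ρ s s)
    (h : ρ.SameCycle x y) (hx : x ∈ s) : y ∈ s := by
  obtain ⟨i, rfl⟩ := h.exists_nat_pow_eq
  rw [coe_pow]
  exact hs.iterate i hx

variable [DecidableEq α] [Finite α]

theorem sameCycle_mul_swap_of_not_sameCycle (h : ¬ ρ.SameCycle a b) :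
    (ρ * swap a b).SameCycle a b := by
  by_contra hn
  -- `ρ` agrees with `ρ * swap a b` on `s`, so `s` is `ρ`-invariant; yet `ρ b ∈ s` and `b ∉ s`
  let s : Set α := {x | ρ.SameCycle b x ∧ (ρ * swap a b).SameCycle a x}
  have hs : Set.MapsTo ρ s s := by
    rintro x ⟨hbx, hax⟩
    have hxa : x ≠ a := by rintro rfl; exact h hbx.symm
    have hxb : x ≠ b := by rintro rfl; exact hn hax
    have hρx : ρ x = (ρ * swap a b) x := by rw [mul_apply, swap_apply_of_ne_of_ne hxa hxb]
    exact ⟨sameCycle_apply_right.2 hbx, hρx ▸ sameCycle_apply_right.2 hax⟩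
  have hρb : ρ b ∈ s := by
    refine ⟨sameCycle_apply_right.2 (SameCycle.refl ρ b), ?_⟩
    simpa using sameCycle_apply_right.2 (SameCycle.refl (ρ * swap a b) a)
  exact hn (SameCycle.mem_of_mapsTo hs (sameCycle_apply_left.2 (SameCycle.refl ρ b)) hρb).2

theorem not_sameCycle_mul_swap_of_sameCycle (hab : a ≠ b) (h : ρ.SameCycle a b) :
    ¬ (ρ * swap a b).SameCycle a b := by
  have hk : ∃ k, 0 < k ∧ (ρ ^ k) b = a := by
    obtain ⟨k, hk⟩ := h.symm.exists_nat_pow_eq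
    exact ⟨k, Nat.pos_of_ne_zero (by rintro rfl; exact hab hk.symm), hk⟩
  classical
  set k := Nat.find hk
  obtain ⟨hk0, hka⟩ : 0 < k ∧ (ρ ^ k) b = a := Nat.find_spec hk
  have hne_a : ∀ i, 0 < i → i < k → (ρ ^ i) b ≠ a := fun i hi hik h' =>
    Nat.find_min hk hik ⟨hi, h'⟩
  have hne_b : ∀ i, 0 < i → i < k → (ρ ^ i) b ≠ b := fun i hi hik h' =>
    hne_a (k - i) (by omega) (by omega) <| by
      rw [← h', ← mul_apply, ← pow_add, Nat.sub_add_cancel hik.le, hka]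
  -- the arc `ρ b, ρ² b, …, ρᵏ b = a` is closed under `ρ * swap a b`
  let s : Set α := {x | ∃ i, 0 < i ∧ i ≤ k ∧ (ρ ^ i) b = x}
  have hs : Set.MapsTo (ρ * swap a b) s s := by
    rintro _ ⟨i, hi, hik, rfl⟩
    rcases hik.lt_or_eq with hik | rfl
    · refine ⟨i + 1, by omega, hik, ?_⟩
      rw [mul_apply, swap_apply_of_ne_of_ne (hne_a i hi hik) (hne_b i hi hik), pow_succ',
        mul_apply]
    · exact ⟨1, by omega, hk0, by rw [hka, mul_apply, swap_apply_left, pow_one]⟩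
  intro hρab
  obtain ⟨i, hi, hik, hib⟩ := SameCycle.mem_of_mapsTo hs hρab ⟨k, hk0, le_rfl, hka⟩
  rcases hik.lt_or_eq with hik | rfl
  · exact hne_b i hi hik hib
  · exact hab (hka.symm.trans hib)

end SameCycle

section Orbits

variable {S : Set (Perm α)} {ρ g : Perm α} {a b x y : α}

theorem orbitRel_closure_le {t : Setoid α} (h : ∀ g ∈ S, ∀ x, t x (g x)) :
    orbitRel (closure S) α ≤ t := by
  rintro _ y ⟨⟨g, hg⟩, rfl⟩
  suffices ∀ z, t (g z) z from this y
  induction hg using closure_induction with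
  | mem g hg => exact fun y => t.symm' (h g hg y)
  | one => exact t.refl'
  | mul g k _ _ ihg ihk => exact fun y => t.trans' (ihg (k y)) (ihk y)
  | inv g _ ih => exact fun y => by simpa using t.symm' (ih (g⁻¹ y))

theorem orbitRel_closure_of_sameCycle (hg : g ∈ closure S) (h : g.SameCycle x y) :
    orbitRel (closure S) α x y := by
  obtain ⟨i, hi⟩ := h.symm
  exact ⟨⟨g ^ i, zpow_mem hg i⟩, hi⟩

theorem orbitRel_closure_apply (hg : g ∈ closure S) (x : α) : orbitRel (closure S) α x (g x) :=
  orbitRel_closure_of_sameCycle hg (sameCycle_apply_right.2 (SameCycle.refl g x))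

theorem orbitRel_closure_singleton : orbitRel (closure {ρ}) α x y ↔ ρ.SameCycle x y := by
  refine ⟨?_, orbitRel_closure_of_sameCycle (subset_closure rfl)⟩
  rintro ⟨⟨g, hg⟩, rfl⟩
  obtain ⟨i, rfl⟩ := mem_closure_singleton.1 hg
  exact SameCycle.symm ⟨i, rfl⟩

theorem mergeClasses_orbitRel_closure_insert_mul_swap [DecidableEq α] (S : Set (Perm α))
    (ρ : Perm α) (a b : α) :
    (orbitRel (closure (insert (ρ * swap a b) S)) α).mergeClasses a b =
      (orbitRel (closure (insert ρ S)) α).mergeClasses a b := by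
  suffices key : ∀ ρ : Perm α, (orbitRel (closure (insert (ρ * swap a b) S)) α).mergeClasses a b ≤
      (orbitRel (closure (insert ρ S)) α).mergeClasses a b by
    refine le_antisymm (key ρ) ?_
    have := key (ρ * swap a b)
    rwa [mul_swap_mul_self] at this
  intro ρ
  set t := (orbitRel (closure (insert ρ S)) α).mergeClasses a b
  have hswap : ∀ x, t x (swap a b x) := fun x => by
    rcases eq_or_ne x a with rfl | hxa
    · simpa using Setoid.mergeClasses_rel
    rcases eq_or_ne x b with rfl | hxb
    · simp [t.symm' Setoid.mergeClasses_rel]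
    · rw [swap_apply_of_ne_of_ne hxa hxb]
  refine Setoid.mergeClasses_le (orbitRel_closure_le fun g hg x => ?_) Setoid.mergeClasses_rel
  rcases Set.mem_insert_iff.1 hg with rfl | hg
  · exact t.trans' (hswap x)
      (Setoid.le_mergeClasses (orbitRel_closure_apply (subset_closure (Set.mem_insert _ _)) _))
  · exact Setoid.le_mergeClasses
      (orbitRel_closure_apply (subset_closure (Set.mem_insert_of_mem _ hg)) x)

end Orbits

noncomputable def numOrbits (S : Set (Perm α)) : ℕ := Nat.card (orbitRel.Quotient (closure S) α)

noncomputable def numCycles (ρ : Perm α) : ℕ := numOrbits {ρ}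

theorem numCycles_one : numCycles (1 : Perm α) = Nat.card α := by
  refine (Nat.card_congr (Equiv.ofBijective _ ⟨fun x y hxy => ?_, Quotient.mk_surjective⟩)).symm
  exact sameCycle_one.1 (orbitRel_closure_singleton.1 (Quotient.exact hxy))

theorem numOrbits_pair_one (ρ : Perm α) : numOrbits {ρ, 1} = numCycles ρ := by
  rw [numCycles, numOrbits, numOrbits, Set.pair_comm, closure_insert_one]

variable [Finite α]

theorem numCycles_le_card (ρ : Perm α) : numCycles ρ ≤ Nat.card α :=
  Nat.card_le_card_of_surjective _ Quotient.mk_surjective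

variable [DecidableEq α] {ρ : Perm α} {a b : α}

theorem numCycles_mul_swap_of_sameCycle (hab : a ≠ b) (h : ρ.SameCycle a b) :
    numCycles (ρ * swap a b) = numCycles ρ + 1 := by
  have key : Nat.card (Quotient ((orbitRel (closure {ρ * swap a b}) α).mergeClasses a b)) =
      Nat.card (Quotient ((orbitRel (closure {ρ}) α).mergeClasses a b)) := by
    have := mergeClasses_orbitRel_closure_insert_mul_swap ∅ ρ a b
    rw [LawfulSingleton.insert_empty_eq, LawfulSingleton.insert_empty_eq] at this
    rw [this]
  rw [Setoid.mergeClasses_eq_self (orbitRel_closure_singleton.2 h)] at key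
  have split := Setoid.card_quotient_mergeClasses_add_one
    (mt orbitRel_closure_singleton.1 (not_sameCycle_mul_swap_of_sameCycle hab h))
  change Nat.card (Quotient (orbitRel (closure {ρ * swap a b}) α)) =
    Nat.card (Quotient (orbitRel (closure {ρ}) α)) + 1
  omega

theorem numCycles_mul_swap_add_one_of_not_sameCycle (h : ¬ ρ.SameCycle a b) :
    numCycles (ρ * swap a b) + 1 = numCycles ρ := by
  have hab : a ≠ b := by rintro rfl; exact h (SameCycle.refl ρ a)
  simpa [mul_swap_mul_self] using
    (numCycles_mul_swap_of_sameCycle hab (sameCycle_mul_swap_of_not_sameCycle h)).symm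

/-- Nonnegativity of the genus of the hypermap `(σ, φ)`. -/
theorem numCycles_add_numCycles_add_numCycles_mul_le (σ φ : Perm α) :
    numCycles σ + numCycles φ + numCycles (σ * φ) ≤ Nat.card α + 2 * numOrbits {σ, φ} := by
  rcases eq_or_ne φ 1 with rfl | hφ
  · rw [numCycles_one, mul_one, numOrbits_pair_one]
    omega
  obtain ⟨a, ha⟩ : ∃ a, φ a ≠ a := not_forall.1 fun h => hφ (Equiv.ext h)
  set φ' := φ * swap a (φ a)
  have hφ' : numCycles φ' = numCycles φ + 1 :=
    numCycles_mul_swap_of_sameCycle ha.symm (sameCycle_apply_right.2 (SameCycle.refl φ a))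
  have := numCycles_le_card φ'
  have ih := numCycles_add_numCycles_add_numCycles_mul_le σ φ'
  have hσφ : σ * φ = σ * φ' * swap a (φ a) := by rw [mul_assoc, mul_swap_mul_self]
  have hpair (ψ : Perm α) :
      numOrbits {σ, ψ} = Nat.card (Quotient (orbitRel (closure (insert ψ {σ})) α)) := by
    rw [numOrbits, Set.pair_comm]
  have horb : (orbitRel (closure (insert φ' {σ})) α).mergeClasses a (φ a) =
      orbitRel (closure (insert φ {σ})) α := by
    rw [mergeClasses_orbitRel_closure_insert_mul_swap, Setoid.mergeClasses_eq_self
      (orbitRel_closure_apply (subset_closure (Set.mem_insert _ _)) a)]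
  by_cases hc : (σ * φ').SameCycle a (φ a)
  · have hσφ' : numCycles (σ * φ) = numCycles (σ * φ') + 1 := by
      rw [hσφ]
      exact numCycles_mul_swap_of_sameCycle ha.symm hc
    have hrel : orbitRel (closure (insert φ' {σ})) α a (φ a) :=
      orbitRel_closure_of_sameCycle
        (mul_mem (subset_closure (by simp)) (subset_closure (by simp))) hc
    rw [Setoid.mergeClasses_eq_self hrel] at horb
    have : numOrbits {σ, φ'} = numOrbits {σ, φ} := by rw [hpair, hpair, horb]
    omega
  · have hσφ' : numCycles (σ * φ) + 1 = numCycles (σ * φ') := by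
      rw [hσφ]
      exact numCycles_mul_swap_add_one_of_not_sameCycle hc
    have hle := Setoid.card_quotient_le_card_quotient_mergeClasses_add_one
      (s := orbitRel (closure (insert φ' {σ})) α) (a := a) (b := φ a)
    rw [horb, ← hpair, ← hpair] at hle
    omega
termination_by Nat.card α - numCycles φ
decreasing_by change Nat.card α - numCycles φ' < _; omega

theorem two_le_numOrbits_of_sameCycle {σ β : Perm α} (hab : a ≠ b)
    (hβ : β.SameCycle a b) (hσβ : (σ⁻¹ * β).SameCycle a b)
    (hsum : numCycles σ + numCycles (σ⁻¹ * β) = Nat.card α) (hβ2 : 2 ≤ numCycles β) :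
    2 ≤ numOrbits {σ, β * swap a b} := by
  have genus := numCycles_add_numCycles_add_numCycles_mul_le σ (σ⁻¹ * β * swap a b)
  rw [mul_assoc, mul_inv_cancel_left, numOrbits, closure_pair_inv_mul, ← numOrbits,
    ← mul_assoc, numCycles_mul_swap_of_sameCycle hab hσβ,
    numCycles_mul_swap_of_sameCycle hab hβ] at genus
  omega

end Equiv.Perm

theorem cycleCount_eq_numCycles {N : ℕ} (σ : Perm (Fin N)) : cycleCount σ = numCycles σ := by
  have hclasses : {O : Set (Fin N) | ∃ x, O = {y | σ.SameCycle x y}} =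
      (orbitRel (closure {σ}) (Fin N)).classes := by
    ext O
    simp only [Setoid.classes, orbitRel_closure_singleton, sameCycle_comm (x := _)]
  rw [cycleCount, hclasses, ← Nat.card_coe_set_eq, numCycles, numOrbits]
  exact Nat.card_congr (Setoid.quotientEquivClasses _).symm

theorem JointTrans.numOrbits_le_one {N : ℕ} {π ρ : Perm (Fin N)} (h : JointTrans π ρ) :
    numOrbits {π, ρ} ≤ 1 := by
  refine Finite.card_le_one_iff_subsingleton.2 ⟨Quotient.ind₂ fun x y => Quotient.sound ?_⟩
  obtain ⟨g, hg, hgy⟩ := h y x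
  exact ⟨⟨g, hg⟩, hgy⟩

theorem val_finRotate_of_lt {n : ℕ} (i : Fin n) (h : i.val + 1 < n) :
    (finRotate n i).val = i.val + 1 := by
  obtain ⟨n, rfl⟩ : ∃ k, n = k + 1 := ⟨n - 1, by omega⟩
  exact coe_finRotate_of_ne_last (Fin.ne_of_val_ne (by rw [Fin.val_last]; omega))

section Annular

variable {p q : ℕ}

theorem annularGamma_castAdd (i : Fin p) :
    annularGamma p q (Fin.castAdd q i) = Fin.castAdd q (finRotate p i) := by
  simp [annularGamma]

theorem annularGamma_natAdd (j : Fin q) :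
    annularGamma p q (Fin.natAdd p j) = Fin.natAdd p (finRotate q j) := by
  simp [annularGamma]

theorem val_annularGamma (x : Fin (p + q)) (hp : x.val + 1 ≠ p) (hpq : x.val + 1 ≠ p + q) :
    (annularGamma p q x).val = x.val + 1 := by
  induction x using Fin.addCases with
  | left i =>
    simp only [annularGamma_castAdd, Fin.val_castAdd] at *
    exact val_finRotate_of_lt i (by omega)
  | right j =>
    simp only [annularGamma_natAdd, Fin.val_natAdd] at *
    rw [val_finRotate_of_lt j (by omega)]
    omega

theorem two_le_numCycles_annularGamma (hp : 0 < p) (hq : 0 < q) :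
    2 ≤ numCycles (annularGamma p q) := by
  have hmaps : Set.MapsTo (annularGamma p q) {z | z.val < p} {z | z.val < p} := by
    intro x hx
    induction x using Fin.addCases with
    | left i => simp [annularGamma_castAdd]
    | right j => simp at hx
  refine Finite.one_lt_card_iff_nontrivial.2 ⟨⟦⟨0, by omega⟩⟧, ⟦⟨p, by omega⟩⟧, fun h => ?_⟩
  have hpp := (orbitRel_closure_singleton.1 (Quotient.exact h)).mem_of_mapsTo hmaps hp
  exact lt_irrefl p hpp

theorem val_intervalInvolution_of_even {N : ℕ} (hN : N % 2 = 0) (x : Fin N)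
    (hx : x.val % 2 = 0) : (intervalInvolution N x).val = x.val + 1 := by
  change (if x.val % 2 = 0 then min (x.val + 1) (N - 1) else x.val - 1) = x.val + 1
  rw [if_pos hx]
  omega

theorem val_intervalInvolution_of_odd {N : ℕ} (x : Fin N) (hx : x.val % 2 = 1) :
    (intervalInvolution N x).val = x.val - 1 := by
  change (if x.val % 2 = 0 then min (x.val + 1) (N - 1) else x.val - 1) = x.val - 1
  rw [if_neg (by omega)]

theorem intervalInvolution_involutive (N : ℕ) : Function.Involutive (intervalInvolution N) :=
  Function.Involutive.toPerm_involutive _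

theorem annularGamma_mul_swap_apply_of_even (hp : p % 2 = 0) (hq : q % 2 = 0)
    {r s x : Fin (p + q)} (hr : r.val % 2 = 1) (hs : s.val % 2 = 1) (hx : x.val % 2 = 0) :
    (annularGamma p q * swap r s) x = intervalInvolution (p + q) x := by
  rw [mul_apply, swap_apply_of_ne_of_ne (by rintro rfl; omega) (by rintro rfl; omega)]
  ext
  rw [val_annularGamma x (by omega) (by omega), val_intervalInvolution_of_even (by omega) x hx]

theorem orbitRel_closure_intervalInvolution_le (hp : p % 2 = 0) (hq : q % 2 = 0)
    (π : Perm (Fin (p + q))) {r s : Fin (p + q)} (hr : r.val % 2 = 1) (hs : s.val % 2 = 1) :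
    orbitRel (closure {π, intervalInvolution (p + q)}) (Fin (p + q)) ≤
      orbitRel (closure {π, annularGamma p q * swap r s}) (Fin (p + q)) := by
  set t := orbitRel (closure {π, annularGamma p q * swap r s}) (Fin (p + q))
  have hβ := orbitRel_closure_apply (S := {π, annularGamma p q * swap r s})
    (subset_closure (Set.mem_insert_of_mem _ rfl))
  refine orbitRel_closure_le fun g hg x => ?_
  rcases hg with rfl | rfl
  · exact orbitRel_closure_apply (subset_closure (Set.mem_insert _ _)) x
  rcases Nat.mod_two_eq_zero_or_one x.val with hx | hx
  · rw [← annularGamma_mul_swap_apply_of_even hp hq hr hs hx]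
    exact hβ x
  · have hIx : (intervalInvolution (p + q) x).val % 2 = 0 := by
      rw [val_intervalInvolution_of_odd x hx]
      omega
    have := hβ (intervalInvolution (p + q) x)
    rw [annularGamma_mul_swap_apply_of_even hp hq hr hs hIx, intervalInvolution_involutive] at this
    exact t.symm' this

end Annular

theorem stmt_3 (n m : ℕ) (hn : 1 ≤ n) (hm : 1 ≤ m)
    (π : Equiv.Perm (Fin (2 * n + 2 * m)))
    (hπ : AnnularNC (2 * n) (2 * m) π)
    (htrans : JointTrans π (intervalInvolution (2 * n + 2 * m))) :
    ∀ r s : Fin (2 * n + 2 * m), r ≠ s →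
      (r.val + 1) % 2 = 0 → (s.val + 1) % 2 = 0 →
      (annularGamma (2 * n) (2 * m)).SameCycle r s →
      ¬ (π⁻¹ * annularGamma (2 * n) (2 * m)).SameCycle r s := by
  intro r s hne hr hs hγ hπγ
  have hsum := hπ.2
  rw [cycleCount_eq_numCycles, cycleCount_eq_numCycles] at hsum
  have hsplit : 2 ≤ numOrbits {π, annularGamma (2 * n) (2 * m) * swap r s} :=
    two_le_numOrbits_of_sameCycle hne hγ hπγ (by rwa [Nat.card_fin])
      (two_le_numCycles_annularGamma (by omega) (by omega))
  have hcoarser : numOrbits {π, annularGamma (2 * n) (2 * m) * swap r s} ≤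
      numOrbits {π, intervalInvolution (2 * n + 2 * m)} :=
    Setoid.card_quotient_le_of_le
      (orbitRel_closure_intervalInvolution_le (by omega) (by omega) π (by omega) (by omega))
  have := htrans.numOrbits_le_one
  omega
end

section
/- Let n, m ≥ 1, let π ∈ J_{2n,2m}, set γ = γ_{2n,2m} and I = I_{2n+2m}. Then a subset O ⊆ {1,…,2n+2m} consisting entirely of odd numbers is a cycle (orbit) of I∘π if and only if it is a cycle of γ⁻¹∘π; moreover, the permutations I∘π and γ⁻¹∘π agree pointwise on every such subset O. -/
/-!
Both `I` and `γ⁻¹` send each even number `2k` to `2k - 1` and each odd number to an even one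
(the cycles of `γ` have even length and start at odd numbers). Hence `Iπ` and `γ⁻¹π` agree at
every point that one of them sends to an odd number. Along a cycle of either permutation made of
odd numbers they therefore agree step by step, so the two cycles are the same set.
-/

open Equiv

theorem Equiv.Perm.zpow_apply_eq_of_eqOn {α : Type*} {f g : Perm α} {x : α}
    (h : Set.EqOn f g {y | f.SameCycle x y}) (k : ℤ) : (f ^ k) x = (g ^ k) x := by
  induction k using Int.induction_on with
  | zero => rfl
  | succ k ih =>
    rw [add_comm, zpow_one_add, zpow_one_add, Perm.mul_apply, Perm.mul_apply, ← ih]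
    exact h ⟨k, rfl⟩
  | pred k ih =>
    apply g.injective
    rw [← h ⟨_, rfl⟩, ← Perm.mul_apply, ← Perm.mul_apply, ← zpow_one_add, ← zpow_one_add,
      add_sub_cancel, ih]

theorem Equiv.Perm.setOf_sameCycle_eq_of_eqOn {α : Type*} {f g : Perm α} {x : α}
    (h : Set.EqOn f g {y | f.SameCycle x y}) : {y | f.SameCycle x y} = {y | g.SameCycle x y} := by
  ext y
  exact exists_congr fun k => by rw [zpow_apply_eq_of_eqOn h]

theorem val_finRotate {p : ℕ} (i : Fin p) :
    (finRotate p i).val = if i.val + 1 = p then 0 else i.val + 1 := by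
  cases p with
  | zero => exact i.elim0
  | succ p => simp only [coe_finRotate, Fin.ext_iff, Fin.val_last, Nat.add_right_cancel_iff]

theorem val_annularGamma_s10 {p q : ℕ} (w : Fin (p + q)) :
    (annularGamma p q w).val =
      if w.val + 1 = p then 0 else if w.val + 1 = p + q then p else w.val + 1 := by
  induction w using Fin.addCases with
  | left i =>
    simp only [annularGamma, Equiv.permCongr_apply, finSumFinEquiv_symm_apply_castAdd,
      Equiv.sumCongr_apply, Sum.map_inl, finSumFinEquiv_apply_left, Fin.val_castAdd, val_finRotate]
    split_ifs <;> omega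
  | right j =>
    simp only [annularGamma, Equiv.permCongr_apply, finSumFinEquiv_symm_apply_natAdd,
      Equiv.sumCongr_apply, Sum.map_inr, finSumFinEquiv_apply_right, Fin.val_natAdd, val_finRotate]
    have := j.isLt
    split_ifs <;> omega

theorem val_intervalInvolution {N : ℕ} (z : Fin N) :
    (intervalInvolution N z).val = if z.val % 2 = 0 then min (z.val + 1) (N - 1) else z.val - 1 :=
  rfl

-- `z.val % 2 = 0` says that `z` represents an odd number.
theorem intervalInvolution_apply_eq_annularGamma_inv_apply {n m : ℕ} (z : Fin (2 * n + 2 * m))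
    (h : (intervalInvolution _ z).val % 2 = 0 ∨ ((annularGamma (2 * n) (2 * m))⁻¹ z).val % 2 = 0) :
    intervalInvolution _ z = (annularGamma (2 * n) (2 * m))⁻¹ z := by
  obtain ⟨w, rfl⟩ := (annularGamma (2 * n) (2 * m)).surjective z
  simp only [Perm.coe_inv, symm_apply_apply] at h ⊢
  have := w.isLt
  apply Fin.ext
  rw [val_intervalInvolution] at h ⊢
  have := val_annularGamma_s10 w
  split_ifs at * <;> omega

theorem stmt_10_general (n m : ℕ)
    (π : Equiv.Perm (Fin (2 * n + 2 * m)))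
    (O : Set (Fin (2 * n + 2 * m)))
    (hodd : ∀ y ∈ O, (y.val + 1) % 2 = 1) :
    ((∃ x, O = {y | (intervalInvolution (2 * n + 2 * m) * π).SameCycle x y}) ↔
      (∃ x, O = {y | ((annularGamma (2 * n) (2 * m))⁻¹ * π).SameCycle x y})) ∧
    ((∃ x, O = {y | (intervalInvolution (2 * n + 2 * m) * π).SameCycle x y}) →
      ∀ y ∈ O, (intervalInvolution (2 * n + 2 * m) * π) y
        = ((annularGamma (2 * n) (2 * m))⁻¹ * π) y) := by
  have hO : ∀ y ∈ O, y.val % 2 = 0 := fun y hy => by have := hodd y hy; omega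
  set f := intervalInvolution (2 * n + 2 * m) * π
  set g := (annularGamma (2 * n) (2 * m))⁻¹ * π
  have hfg (y) : (f y).val % 2 = 0 ∨ (g y).val % 2 = 0 → f y = g y :=
    intervalInvolution_apply_eq_annularGamma_inv_apply (π y)
  refine ⟨⟨?_, ?_⟩, ?_⟩
  · rintro ⟨x, rfl⟩
    exact ⟨x, Perm.setOf_sameCycle_eq_of_eqOn fun y hy =>
      hfg y (.inl (hO _ (Perm.sameCycle_apply_right.2 hy)))⟩
  · rintro ⟨x, rfl⟩
    exact ⟨x, Perm.setOf_sameCycle_eq_of_eqOn fun y hy =>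
      (hfg y (.inr (hO _ (Perm.sameCycle_apply_right.2 hy)))).symm⟩
  · rintro ⟨x, rfl⟩ y hy
    exact hfg y (.inl (hO _ (Perm.sameCycle_apply_right.2 hy)))

theorem stmt_10 (n m : ℕ) (hn : 1 ≤ n) (hm : 1 ≤ m)
    (π : Equiv.Perm (Fin (2 * n + 2 * m))) (hπ : memJ n m π)
    (O : Set (Fin (2 * n + 2 * m)))
    (hodd : ∀ y ∈ O, (y.val + 1) % 2 = 1) :
    ((∃ x, O = {y | (intervalInvolution (2 * n + 2 * m) * π).SameCycle x y}) ↔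
      (∃ x, O = {y | ((annularGamma (2 * n) (2 * m))⁻¹ * π).SameCycle x y})) ∧
    ((∃ x, O = {y | (intervalInvolution (2 * n + 2 * m) * π).SameCycle x y}) →
      ∀ y ∈ O, (intervalInvolution (2 * n + 2 * m) * π) y
        = ((annularGamma (2 * n) (2 * m))⁻¹ * π) y) :=
  stmt_10_general n m π O hodd
end
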